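/- Expected overcharge under uniform values: with two bidders i.i.d. uniform on [0,1] bidding truthfully and a seller charging min(b₁, b₂ + γ) for γ ∈ (0,1), the seller's expected revenue equals 1/3 + γ - γ² + γ³/3, which is strictly greater than the credible second-price revenue 1/3 and strictly less than the full-surplus revenue E[max] = 2/3 when γ < 1. -/
import Mathlib
open intervalIntegral

lemma cont_f (x γ : ℝ) : Continuous (fun y : ℝ => min (max x y) (min x y + γ)) :=
  (continuous_const.max continuous_id).min ((continuous_const.min continuous_id).add continuous_const)

lemma inner_int (γ x : ℝ) (hγ0 : 0 < γ) (hγ1 : γ < 1) (hx0 : 0 ≤ x) (hx1 : x ≤ 1) :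
    ∫ y in (0:ℝ)..1, min (max x y) (min x y + γ)
      = x + γ - γ*x - γ^2/2 + (max 0 (x+γ-1))^2/2 - (max 0 (x-γ))^2/2 := by
  set f : ℝ → ℝ := fun y => min (max x y) (min x y + γ) with hf
  set a : ℝ := max 0 (x - γ) with ha
  set b : ℝ := min 1 (x + γ) with hb
  have ha0 : 0 ≤ a := le_max_left _ _
  have hax : a ≤ x := max_le hx0 (by linarith)
  have haxγ : x - γ ≤ a := le_max_right _ _
  have hxb : x ≤ b := le_min hx1 (by linarith)
  have hb1 : b ≤ 1 := min_le_left _ _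
  have hbxγ : b ≤ x + γ := min_le_right _ _
  have hI : ∀ u v : ℝ, IntervalIntegrable f MeasureTheory.volume u v :=
    fun u v => (cont_f x γ).intervalIntegrable u v
  have split : ∫ y in (0:ℝ)..1, f y
      = (∫ y in (0:ℝ)..a, f y) + (∫ y in a..x, f y) + (∫ y in x..b, f y) + (∫ y in b..1, f y) := by
    rw [integral_add_adjacent_intervals (hI 0 a) (hI a x),
        integral_add_adjacent_intervals (hI 0 x) (hI x b),
        integral_add_adjacent_intervals (hI 0 b) (hI b 1)]
  have p1 : (∫ y in (0:ℝ)..a, f y) = a^2/2 + γ*a := by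
    rcases le_or_gt x γ with h | h
    · have : a = 0 := max_eq_left (by linarith)
      rw [this]; simp
    · have haxγ' : a = x - γ := max_eq_right (by linarith)
      rw [show (∫ y in (0:ℝ)..a, f y) = ∫ y in (0:ℝ)..a, (y + γ) from
        integral_congr (fun y hy => by
          rw [Set.uIcc_of_le ha0] at hy
          have h1 : y ≤ x := le_trans hy.2 hax
          have h2 : y + γ ≤ x := by rw [haxγ'] at hy; linarith [hy.2]
          simp only [hf]
          rw [max_eq_left h1, min_eq_right h1, min_eq_right h2])]
      rw [integral_add (intervalIntegrable_id) (intervalIntegrable_const), integral_id,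
        integral_const]
      simp [mul_comm]
  have p2 : (∫ y in a..x, f y) = x * (x - a) := by
    rw [show (∫ y in a..x, f y) = ∫ y in a..x, x from
      integral_congr (fun y hy => by
        rw [Set.uIcc_of_le hax] at hy
        have h1 : y ≤ x := hy.2
        have h2 : x ≤ y + γ := by linarith [hy.1]
        simp only [hf]
        rw [max_eq_left h1, min_eq_right h1, min_eq_left h2])]
    rw [integral_const]; simp [mul_comm]
  have p3 : (∫ y in x..b, f y) = (b^2 - x^2)/2 := by
    rw [show (∫ y in x..b, f y) = ∫ y in x..b, y from
      integral_congr (fun y hy => by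
        rw [Set.uIcc_of_le hxb] at hy
        have h1 : x ≤ y := hy.1
        have h2 : y ≤ x + γ := le_trans hy.2 hbxγ
        simp only [hf]
        rw [max_eq_right h1, min_eq_left h1, min_eq_left h2])]
    rw [integral_id]
  have p4 : (∫ y in b..1, f y) = (x + γ) * (1 - b) := by
    rcases le_or_gt 1 (x + γ) with h | h
    · have : b = 1 := min_eq_left h
      rw [this]; simp
    · have hbe : b = x + γ := min_eq_right (by linarith)
      rw [show (∫ y in b..1, f y) = ∫ y in b..1, (x + γ) from
        integral_congr (fun y hy => by
          rw [Set.uIcc_of_le hb1] at hy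
          have h1 : x ≤ y := le_trans hxb hy.1
          have h2 : x + γ ≤ y := by rw [hbe] at hy; exact hy.1
          simp only [hf]
          rw [max_eq_right h1, min_eq_left h1, min_eq_right h2])]
      rw [integral_const]; simp [mul_comm]
  rw [split, p1, p2, p3, p4]
  rcases le_or_gt x γ with h | h
  · have ha' : a = 0 := max_eq_left (by linarith)
    rcases le_or_gt 1 (x + γ) with h' | h'
    · have hb' : b = 1 := min_eq_left h'
      rw [ha', hb', max_eq_right (by linarith : (0:ℝ) ≤ x + γ - 1)]
      ring
    · have hb' : b = x + γ := min_eq_right (by linarith)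
      rw [ha', hb', max_eq_left (by linarith : x + γ - 1 ≤ 0)]
      ring
  · have ha' : a = x - γ := max_eq_right (by linarith)
    rcases le_or_gt 1 (x + γ) with h' | h'
    · have hb' : b = 1 := min_eq_left h'
      rw [ha', hb', max_eq_right (by linarith : (0:ℝ) ≤ x + γ - 1)]
      ring
    · have hb' : b = x + γ := min_eq_right (by linarith)
      rw [ha', hb', max_eq_left (by linarith : x + γ - 1 ≤ 0)]
      ring


/-- Two truthful bidders with values i.i.d. uniform on `[0,1]` and a seller charging
`min (max x y) (min x y + γ)` for `γ ∈ (0,1)`: expected revenue is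
`1/3 + γ - γ² + γ³/3`, strictly between the credible second-price revenue `1/3` and the
full-surplus revenue `2/3`. -/
theorem stmt_16 (γ : ℝ) (hγ : γ ∈ Set.Ioo (0:ℝ) 1) :
    (∫ x in (0:ℝ)..1, ∫ y in (0:ℝ)..1, min (max x y) (min x y + γ))
        = 1 / 3 + γ - γ ^ 2 + γ ^ 3 / 3 ∧
    (1 : ℝ) / 3 < 1 / 3 + γ - γ ^ 2 + γ ^ 3 / 3 ∧
    1 / 3 + γ - γ ^ 2 + γ ^ 3 / 3 < 2 / 3 := by
  obtain ⟨hγ0, hγ1⟩ := hγ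
  refine ⟨?_, by nlinarith, by nlinarith [mul_pos (mul_pos (sub_pos.2 hγ1) (sub_pos.2 hγ1)) (sub_pos.2 hγ1)]⟩
  rw [show (∫ x in (0:ℝ)..1, ∫ y in (0:ℝ)..1, min (max x y) (min x y + γ))
      = ∫ x in (0:ℝ)..1, ((x + γ - γ*x - γ^2/2) + (max 0 (x+γ-1))^2/2 - (max 0 (x-γ))^2/2) from
    integral_congr (fun x hx => by
      rw [Set.uIcc_of_le (by norm_num : (0:ℝ) ≤ 1)] at hx
      rw [inner_int γ x hγ0 hγ1 hx.1 hx.2])]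
  have hIp : ∀ u v : ℝ, IntervalIntegrable (fun x : ℝ => (max 0 (x - γ))^2/2) MeasureTheory.volume u v :=
    fun u v => (((continuous_const.max (continuous_id.sub continuous_const)).pow 2).div_const 2).intervalIntegrable u v
  have hIq : ∀ u v : ℝ, IntervalIntegrable (fun x : ℝ => (max 0 (x + γ - 1))^2/2) MeasureTheory.volume u v :=
    fun u v => (((continuous_const.max ((continuous_id.add continuous_const).sub continuous_const)).pow 2).div_const 2).intervalIntegrable u v
  have hIpoly : ∀ u v : ℝ, IntervalIntegrable (fun x : ℝ => x + γ - γ*x - γ^2/2) MeasureTheory.volume u v :=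
    fun u v => (by continuity : Continuous (fun x : ℝ => x + γ - γ*x - γ^2/2)).intervalIntegrable u v
  rw [integral_sub ((hIpoly 0 1).add (hIq 0 1)) (hIp 0 1), integral_add (hIpoly 0 1) (hIq 0 1)]
  have hpoly : ∫ x in (0:ℝ)..1, (x + γ - γ*x - γ^2/2) = 1/2 + γ/2 - γ^2/2 := by
    rw [show (fun x : ℝ => x + γ - γ*x - γ^2/2) = (fun x : ℝ => (1-γ)*x + (γ - γ^2/2)) from
      funext (fun x => by ring)]
    rw [integral_add ((intervalIntegrable_id).const_mul _) (intervalIntegrable_const),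
      integral_const_mul, integral_id, integral_const]
    simp; ring
  have hp : ∫ x in (0:ℝ)..1, (max 0 (x - γ))^2/2 = (1-γ)^3/6 := by
    have hI : ∀ u v : ℝ, IntervalIntegrable (fun x : ℝ => (max 0 (x - γ))^2/2) MeasureTheory.volume u v := hIp
    rw [← integral_add_adjacent_intervals (hI 0 γ) (hI γ 1)]
    have e1 : ∫ x in (0:ℝ)..γ, (max 0 (x - γ))^2/2 = 0 := by
      rw [show (∫ x in (0:ℝ)..γ, (max 0 (x - γ))^2/2) = ∫ x in (0:ℝ)..γ, (0:ℝ) from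
        integral_congr (fun x hx => by
          rw [Set.uIcc_of_le hγ0.le] at hx
          rw [max_eq_left (by linarith [hx.2])]; norm_num)]
      simp
    have e2 : ∫ x in γ..(1:ℝ), (max 0 (x - γ))^2/2 = (1-γ)^3/6 := by
      rw [show (∫ x in γ..(1:ℝ), (max 0 (x - γ))^2/2) = ∫ x in γ..(1:ℝ), (x - γ)^2/2 from
        integral_congr (fun x hx => by
          rw [Set.uIcc_of_le hγ1.le] at hx
          rw [max_eq_right (by linarith [hx.1])])]
      rw [intervalIntegral.integral_comp_sub_right (fun u => u^2/2) γ, integral_div, integral_pow]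
      ring
    rw [e1, e2]; ring
  have hq : ∫ x in (0:ℝ)..1, (max 0 (x + γ - 1))^2/2 = γ^3/6 := by
    have hI := hIq
    rw [← integral_add_adjacent_intervals (hI 0 (1-γ)) (hI (1-γ) 1)]
    have e1 : ∫ x in (0:ℝ)..(1-γ), (max 0 (x + γ - 1))^2/2 = 0 := by
      rw [show (∫ x in (0:ℝ)..(1-γ), (max 0 (x + γ - 1))^2/2) = ∫ x in (0:ℝ)..(1-γ), (0:ℝ) from
        integral_congr (fun x hx => by
          rw [Set.uIcc_of_le (by linarith : (0:ℝ) ≤ 1 - γ)] at hx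
          rw [max_eq_left (by linarith [hx.2])]; norm_num)]
      simp
    have e2 : ∫ x in (1-γ)..(1:ℝ), (max 0 (x + γ - 1))^2/2 = γ^3/6 := by
      rw [show (∫ x in (1-γ)..(1:ℝ), (max 0 (x + γ - 1))^2/2) = ∫ x in (1-γ)..(1:ℝ), (x - (1-γ))^2/2 from
        integral_congr (fun x hx => by
          rw [Set.uIcc_of_le (by linarith : (1:ℝ) - γ ≤ 1)] at hx
          rw [max_eq_right (by linarith [hx.1])]; ring)]
      rw [intervalIntegral.integral_comp_sub_right (fun u => u^2/2) (1-γ), integral_div, integral_pow]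
      ring
    rw [e1, e2]; ring
  rw [hpoly, hp, hq]; ring
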